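/- arXiv:1608.02522 — 2 statements merged into one kernel-verified Lean document; each statement's English description precedes it below -/
import Mathlib

section
/- Let k ≥ 0, m = 4k+3, ζ a primitive m-th root of unity. For integers i, ℓ with 0 ≤ i ≤ 2k+2 and 0 ≤ ℓ ≤ 2k, the sum ∑_{s=0}^{8k+5} ζ^{(2i-2ℓ-3)s} (-1)^{s(2+ℓ-i)} is nonzero if and only if (i, ℓ) = (0, 2k). -/
/-!
The summand is `r ^ s` with `r = ζ ^ (2i - 2ℓ - 3) * (-1) ^ (2 + ℓ - i)`, and `r ^ (8k + 6) = 1`,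
so the sum runs over a full period of the geometric progression and vanishes unless `r = 1`.
Squaring `r = 1` kills the sign, so `4k + 3 ∣ 2(2i - 2ℓ - 3)`, hence `4k + 3 ∣ 2i - 2ℓ - 3` as
`4k + 3` is odd. In the given range `-(4k + 3) ≤ 2i - 2ℓ - 3 ≤ 4k + 1`, and the exponent is odd,
so it equals `-(4k + 3)`, which forces `(i, ℓ) = (0, 2k)`; there `r = 1` and the sum is `8k + 6`.
-/

open Finset

theorem geom_sum_ne_zero_iff_eq_one {K : Type*} [Field K] [CharZero K] {r : K} {n : ℕ}
    (hn : n ≠ 0) (hr : r ^ n = 1) : ∑ s ∈ range n, r ^ s ≠ 0 ↔ r = 1 := by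
  refine ⟨fun h => ?_, fun h => by simpa [h] using hn⟩
  by_contra hr1
  exact h (by rw [geom_sum_eq hr1, hr, sub_self, zero_div])

theorem zpow_mul_neg_one_zpow_pow_two_mul_eq_one {K : Type*} [Field K] {ζ : K} {m : ℕ}
    (hζ : ζ ^ m = 1) (e f : ℤ) : (ζ ^ e * (-1) ^ f) ^ (2 * m) = 1 := by
  have hζe : (ζ ^ e) ^ m = 1 := by
    rw [← zpow_natCast, ← zpow_mul, mul_comm, zpow_mul, zpow_natCast, hζ, one_zpow]
  have hsign : ((-1 : K) ^ f) ^ (2 * m) = 1 := by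
    rw [← zpow_natCast, ← zpow_mul]; exact Even.neg_one_zpow ⟨f * m, by push_cast; ring⟩
  rw [mul_pow, hsign, pow_mul', hζe, one_pow, one_mul]

theorem IsPrimitiveRoot.dvd_of_zpow_mul_neg_one_zpow_eq_one {K : Type*} [Field K] {ζ : K}
    {m : ℕ} (hζ : IsPrimitiveRoot ζ m) (hm : Odd m) {e f : ℤ} (h : ζ ^ e * (-1) ^ f = 1) :
    (m : ℤ) ∣ e := by
  have hsign : ((-1 : K) ^ f) ^ 2 = 1 := by
    rw [← zpow_natCast, ← zpow_mul]; exact Even.neg_one_zpow ⟨f, by push_cast; ring⟩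
  have hsq : ζ ^ (e * 2) = 1 := by
    have := congrArg (· ^ 2) h
    simp only [mul_pow, hsign, mul_one, one_pow] at this
    rwa [zpow_mul, zpow_ofNat]
  have hcop : IsCoprime (m : ℤ) 2 := (Nat.coprime_two_right.mpr hm).isCoprime
  exact hcop.dvd_of_dvd_mul_right ((hζ.zpow_eq_one_iff_dvd _).mp hsq)

/-- For ζ a primitive (4k+3)-th root of unity and 0 ≤ i ≤ 2k+2, 0 ≤ ℓ ≤ 2k,
    the sum ∑_{s=0}^{8k+5} ζ^{(2i-2ℓ-3)s}(-1)^{s(2+ℓ-i)} is nonzero iff (i,ℓ)=(0,2k). -/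
theorem stmt_5 (k : ℕ) (ζ : ℂ) (hζ : IsPrimitiveRoot ζ (4 * k + 3))
    (i ℓ : ℤ) (hi0 : 0 ≤ i) (hi : i ≤ 2 * k + 2) (hl0 : 0 ≤ ℓ) (hl : ℓ ≤ 2 * k) :
    (∑ s ∈ Finset.range (8 * k + 6),
        ζ ^ ((2 * i - 2 * ℓ - 3) * (s : ℤ)) * (-1 : ℂ) ^ ((s : ℤ) * (2 + ℓ - i)) ≠ 0) ↔
      (i = 0 ∧ ℓ = 2 * k) := by
  set r : ℂ := ζ ^ (2 * i - 2 * ℓ - 3) * (-1) ^ (2 + ℓ - i) with hr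
  have hsummand (s : ℕ) :
      ζ ^ ((2 * i - 2 * ℓ - 3) * (s : ℤ)) * (-1 : ℂ) ^ ((s : ℤ) * (2 + ℓ - i)) = r ^ s := by
    rw [mul_comm (s : ℤ), zpow_mul, zpow_mul, ← mul_zpow, zpow_natCast]
  have hperiod : r ^ (8 * k + 6) = 1 := by
    simpa only [show 2 * (4 * k + 3) = 8 * k + 6 by ring] using
      zpow_mul_neg_one_zpow_pow_two_mul_eq_one hζ.pow_eq_one _ _
  simp only [hsummand, geom_sum_ne_zero_iff_eq_one (by omega) hperiod]
  constructor
  · intro hr_one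
    obtain ⟨c, hc⟩ := hζ.dvd_of_zpow_mul_neg_one_zpow_eq_one ⟨k * 2 + 1, by ring⟩ hr_one
    push_cast at hc
    have hc_ge : -1 ≤ c := by nlinarith
    have hc_lt : c < 1 := by nlinarith
    interval_cases c <;> omega
  · rintro ⟨rfl, rfl⟩
    have he : (2 * 0 - 2 * (2 * k : ℤ) - 3) = -((4 * k + 3 : ℕ) : ℤ) := by push_cast; ring
    rw [hr, he, zpow_neg, zpow_natCast, hζ.pow_eq_one, inv_one, one_mul]
    exact Even.neg_one_zpow ⟨k + 1, by ring⟩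
end

section
/- Let k ≥ 1 and ζ a primitive (4k+3)-th root of unity, α = diag(ζ, -ζ⁻¹). If L ∈ GL(2,ℂ) satisfies L⁻¹ ∘ Q ∘ L = Q for the vector field Q(x,y) = (y^{2k+2}/x^{2k}, 0), then L is diagonal. -/
/-!
Write `L = [[a, b], [c, d]]` and `Q(x, y) = (y^(2k+2) / x^(2k), 0)`. Multiplying the conjugation
identity by `L` gives `Q (L v) = L (Q v)`; at `v = (x, 1)` this reads
`(c x + d)^(2k+2) / (a x + b)^(2k) = a / x^(2k)` and `0 = c / x^(2k)` for all `x` off a finite set.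
The second equation gives `c = 0`, so `a ≠ 0`, and the first becomes the polynomial identity
`d^(2k+2) x^(2k) = a (a x + b)^(2k)`, whose constant term forces `a b^(2k) = 0`, i.e. `b = 0`.
-/

open Polynomial Matrix

theorem Matrix.eq_mulVec_of_inv_mulVec_eq {n R : Type*} [Fintype n] [DecidableEq n] [CommRing R]
    {L : Matrix n n R} (hL : IsUnit L) {u w : n → R} (h : L⁻¹ *ᵥ u = w) : u = L *ᵥ w := by
  rw [← h, mulVec_mulVec, mul_nonsing_inv L ((isUnit_iff_isUnit_det L).mp hL), one_mulVec]

theorem exists_ne_zero_mul_add_ne_zero {K : Type*} [Field K] [NeZero (2 : K)] {a b : K}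
    (hab : a ≠ 0 ∨ b ≠ 0) : ∃ x : K, x ≠ 0 ∧ a * x + b ≠ 0 := by
  by_contra! h
  have hplus : a + b = 0 := by simpa using h 1 one_ne_zero
  have hminus : -a + b = 0 := by simpa using h (-1) (neg_ne_zero.mpr one_ne_zero)
  have ha : a = 0 := by
    have : (2 : K) * a = 0 := by linear_combination hplus - hminus
    simpa [NeZero.ne (2 : K)] using this
  have hb : b = 0 := by linear_combination hplus - ha
  exact hab.elim (· ha) (· hb)

theorem eq_zero_of_forall_mul_pow_eq {K : Type*} [Field K] [Infinite K] {a b e : K} {n : ℕ}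
    (hn : n ≠ 0) (ha : a ≠ 0)
    (h : ∀ x : K, x ≠ 0 → a * x + b ≠ 0 → e * x ^ n = a * (a * x + b) ^ n) : b = 0 := by
  have hagree : {x : K | eval x (C e * X ^ n) = eval x (C a * (C a * X + C b) ^ n)}.Infinite := by
    refine ((Set.toFinite {0, -b / a}).infinite_compl).mono fun x hx => ?_
    simp only [Set.mem_compl_iff, Set.mem_insert_iff, Set.mem_singleton_iff, not_or] at hx
    simp only [Set.mem_ofPred_eq, eval_mul, eval_pow, eval_add, eval_C, eval_X]
    refine h x hx.1 fun hzero => hx.2 ?_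
    field_simp
    linear_combination hzero
  have hconst := congrArg (eval 0) (eq_of_infinite_eval_eq _ _ hagree)
  simp only [eval_mul, eval_pow, eval_add, eval_C, eval_X, mul_zero, zero_add,
    zero_pow hn] at hconst
  simpa [ha, hn] using hconst.symm

noncomputable def vectorFieldQ (k : ℕ) (w : Fin 2 → ℂ) : Fin 2 → ℂ :=
  ![w 1 ^ (2 * k + 2) / w 0 ^ (2 * k), 0]

theorem entries_eq_of_conj_vectorFieldQ {k : ℕ} {L : Matrix (Fin 2) (Fin 2) ℂ} (hL : IsUnit L)
    (hinv : ∀ v : Fin 2 → ℂ, v 0 ≠ 0 → (L *ᵥ v) 0 ≠ 0 →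
      L⁻¹ *ᵥ vectorFieldQ k (L *ᵥ v) = vectorFieldQ k v)
    {x : ℂ} (hx : x ≠ 0) (hax : L 0 0 * x + L 0 1 ≠ 0) :
    (L 1 0 * x + L 1 1) ^ (2 * k + 2) / (L 0 0 * x + L 0 1) ^ (2 * k) = L 0 0 / x ^ (2 * k) ∧
      L 1 0 / x ^ (2 * k) = 0 := by
  have hLv : L *ᵥ ![x, 1] = ![L 0 0 * x + L 0 1, L 1 0 * x + L 1 1] := by
    simp [mulVec_fin_two]
  have h := eq_mulVec_of_inv_mulVec_eq hL (hinv ![x, 1] hx (by simpa [hLv] using hax))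
  rw [hLv, vectorFieldQ, vectorFieldQ, mulVec_fin_two] at h
  have h0 := congrFun h 0
  have h1 := congrFun h 1
  simp only [cons_val_zero, cons_val_one, one_pow, mul_zero, add_zero, mul_one_div] at h0 h1
  exact ⟨h0, h1.symm⟩

theorem stmt_19_general (k : ℕ) (hk : 1 ≤ k)
    (L : Matrix (Fin 2) (Fin 2) ℂ) (hL : IsUnit L)
    (hinv : ∀ v : Fin 2 → ℂ, v 0 ≠ 0 → (L.mulVec v) 0 ≠ 0 →
      (L⁻¹).mulVec
          ((fun w : Fin 2 → ℂ => ![w 1 ^ (2 * k + 2) / w 0 ^ (2 * k), 0]) (L.mulVec v)) =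
        ![v 1 ^ (2 * k + 2) / v 0 ^ (2 * k), 0]) :
    L 0 1 = 0 ∧ L 1 0 = 0 := by
  have hdet : L 0 0 * L 1 1 - L 0 1 * L 1 0 ≠ 0 := by
    simpa [det_fin_two] using ((isUnit_iff_isUnit_det L).mp hL).ne_zero
  have hrow : L 0 0 ≠ 0 ∨ L 0 1 ≠ 0 := by
    by_contra! h
    exact hdet (by simp [h.1, h.2])
  obtain ⟨x₀, hx₀, hax₀⟩ := exists_ne_zero_mul_add_ne_zero hrow
  have hc : L 1 0 = 0 := by
    simpa [hx₀] using (entries_eq_of_conj_vectorFieldQ hL hinv hx₀ hax₀).2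
  have ha : L 0 0 ≠ 0 := fun h => hdet (by simp [h, hc])
  refine ⟨eq_zero_of_forall_mul_pow_eq (e := L 1 1 ^ (2 * k + 2)) (n := 2 * k) (by omega) ha
    fun x hx hax => ?_, hc⟩
  have h := (entries_eq_of_conj_vectorFieldQ hL hinv hx hax).1
  rw [hc, zero_mul, zero_add] at h
  field_simp at h
  exact h

/-- For k ≥ 1, if an invertible L commutes (by conjugation) with the vector field
    Q(x,y) = (y^{2k+2}/x^{2k}, 0), then L is diagonal. -/
theorem stmt_19 (k : ℕ) (hk : 1 ≤ k) (ζ : ℂ) (hζ : IsPrimitiveRoot ζ (4 * k + 3))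
    (L : Matrix (Fin 2) (Fin 2) ℂ) (hL : IsUnit L)
    (hinv : ∀ v : Fin 2 → ℂ, v 0 ≠ 0 → (L.mulVec v) 0 ≠ 0 →
      (L⁻¹).mulVec
          ((fun w : Fin 2 → ℂ => ![w 1 ^ (2 * k + 2) / w 0 ^ (2 * k), 0]) (L.mulVec v)) =
        ![v 1 ^ (2 * k + 2) / v 0 ^ (2 * k), 0]) :
    L 0 1 = 0 ∧ L 1 0 = 0 :=
  stmt_19_general k hk L hL hinv
end
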